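/- Let (A, →, ⇝, 1) be a pseudo-BCI algebra and let d : A → A be a type I implicative derivation or a type II implicative derivation. Then: (1) d(At(A)) ⊆ At(A); (2) if d(1) ∈ K(A), then d(1) = 1; (3) for all a, b ∈ At(A), d(a·b) = (d(a) · (d(1)→1)) · d(b), where u·v denotes (u→1) ⇝ v; (4) the restriction of d to At(A) is the identity map on At(A) if and only if d(1) = 1. -/
import Mathlib


/-- A pseudo-BCI algebra `(A, →, ⇝, 1)`: `ar` is `→`, `wa` is `⇝`, `one` is `1`. -/
structure PseudoBCI (A : Type*) where
  ar : A → A → A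
  wa : A → A → A
  one : A
  ax1 : ∀ x y z, wa (ar x y) (wa (ar y z) (ar x z)) = one
  ax2 : ∀ x y z, ar (wa x y) (ar (wa y z) (ar x z)) = one
  ax3 : ∀ x, ar one x = x
  ax4 : ∀ x, wa one x = x
  ax5 : ∀ x y, ar x y = one → ar y x = one → x = y

namespace PseudoBCI

variable {A : Type*}

/-- The order: `x ≤ y` iff `x → y = 1`. -/
def le (P : PseudoBCI A) (x y : A) : Prop := P.ar x y = P.one

/-- `x ∪₁ y = (x → y) ⇝ y`. -/
def cup1 (P : PseudoBCI A) (x y : A) : A := P.wa (P.ar x y) y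

/-- `x ∪₂ y = (x ⇝ y) → y`. -/
def cup2 (P : PseudoBCI A) (x y : A) : A := P.ar (P.wa x y) y

/-- `φ_x = (x → 1) ⇝ 1`. -/
def phi (P : PseudoBCI A) (x : A) : A := P.wa (P.ar x P.one) P.one

/-- `a` is an atom: `a ≤ x` implies `x = a`. -/
def IsAtom (P : PseudoBCI A) (a : A) : Prop := ∀ x, P.le a x → x = a

/-- `x ∈ K(A)` iff `x ≤ 1`. -/
def InK (P : PseudoBCI A) (x : A) : Prop := P.le x P.one

/-- Type I implicative derivation. -/
def IsIDerI (P : PseudoBCI A) (d : A → A) : Prop :=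
  (∀ x y, d (P.ar x y) = P.cup2 (P.ar x (d y)) (P.ar (d x) y)) ∧
  (∀ x y, d (P.wa x y) = P.cup1 (P.wa x (d y)) (P.wa (d x) y))

/-- Type II implicative derivation. -/
def IsIDerII (P : PseudoBCI A) (d : A → A) : Prop :=
  (∀ x y, d (P.ar x y) = P.cup2 (P.ar (d x) y) (P.ar x (d y))) ∧
  (∀ x y, d (P.wa x y) = P.cup1 (P.wa (d x) y) (P.wa x (d y)))

/-- Type I symmetric derivation. -/
def IsSDerI (P : PseudoBCI A) (d : A → A) : Prop :=
  (∀ x y, d (P.ar x y) = P.cup2 (P.ar x (d y)) (P.ar y (d x))) ∧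
  (∀ x y, d (P.wa x y) = P.cup1 (P.wa x (d y)) (P.wa y (d x)))

/-- Type II symmetric derivation. -/
def IsSDerII (P : PseudoBCI A) (d : A → A) : Prop :=
  (∀ x y, d (P.ar x y) = P.cup2 (P.ar (d x) y) (P.ar (d y) x)) ∧
  (∀ x y, d (P.wa x y) = P.cup1 (P.wa (d x) y) (P.wa (d y) x))

/-- Deductive system. -/
def IsDS (P : PseudoBCI A) (D : Set A) : Prop :=
  P.one ∈ D ∧ ∀ x y, x ∈ D → P.ar x y ∈ D → y ∈ D

/-- A is p-semisimple: `x ≤ 1` implies `x = 1`. -/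
def PSemisimple (P : PseudoBCI A) : Prop := ∀ x, P.le x P.one → x = P.one

end PseudoBCI

open PseudoBCI

namespace PseudoBCI

section Aux

variable {A : Type*} (P : PseudoBCI A)

/-- `x* = x → 1`. -/
def st (x : A) : A := P.ar x P.one

lemma wa_self (x : A) : P.wa x x = P.one := by
  have h := P.ax1 P.one P.one x
  rw [P.ax3, P.ax3, P.ax4] at h
  exact h

lemma ar_self (x : A) : P.ar x x = P.one := by
  have h := P.ax2 P.one P.one x
  rw [P.ax4, P.ax4, P.ax3, P.ax3] at h
  exact h

lemma p3a (x y : A) : P.wa x (P.wa (P.ar x y) y) = P.one := by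
  have h := P.ax1 P.one x y
  rwa [P.ax3, P.ax3] at h

lemma p3b (x y : A) : P.ar x (P.ar (P.wa x y) y) = P.one := by
  have h := P.ax2 P.one x y
  rwa [P.ax4, P.ax3] at h

lemma wa_of_ar {x y : A} (h : P.ar x y = P.one) : P.wa x y = P.one := by
  have h2 := P.p3a x y
  rw [h, P.ax4] at h2
  exact h2

lemma ar_of_wa {x y : A} (h : P.wa x y = P.one) : P.ar x y = P.one := by
  have h2 := P.p3b x y
  rw [h, P.ax3] at h2
  exact h2

lemma tr {x y z : A} (h1 : P.ar x y = P.one) (h2 : P.ar y z = P.one) :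
    P.ar x z = P.one := by
  have h := P.ax1 x y z
  rw [h1, P.ax4, h2, P.ax4] at h
  exact h

lemma mA {x y : A} (h : P.ar x y = P.one) (z : A) :
    P.ar (P.ar y z) (P.ar x z) = P.one := by
  have h' := P.ax1 x y z
  rw [h, P.ax4] at h'
  exact P.ar_of_wa h'

/-- `x ⇝ y ≤ x → y`. -/
lemma ql (x y : A) : P.ar (P.wa x y) (P.ar x y) = P.one := by
  have h := P.ax2 x x y
  rwa [P.wa_self x, P.ax3] at h

lemma p6 (x : A) : P.ar x P.one = P.wa x P.one := by
  apply P.ax5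
  · have h := P.ax1 x P.one x
    rw [P.ax3 x, P.ar_self x] at h
    exact P.ar_of_wa h
  · exact P.ql x P.one

lemma st_one : P.st P.one = P.one := P.ax3 P.one

lemma le_star2 (x : A) : P.ar x (P.st (P.st x)) = P.one := by
  have h := P.p3a x P.one
  rw [← P.p6 (P.ar x P.one)] at h
  exact P.ar_of_wa h

lemma anti {x y : A} (h : P.ar x y = P.one) : P.ar (P.st y) (P.st x) = P.one :=
  P.mA h P.one

lemma st3 (x : A) : P.st (P.st (P.st x)) = P.st x :=
  P.ax5 _ _ (P.anti (P.le_star2 x)) (P.le_star2 (P.st x))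

lemma k1 (x y : A) : P.ar (P.st x) (P.ar y (P.ar x y)) = P.one := by
  have h := P.ax2 x P.one y
  rw [P.ax4 y, ← P.p6 x] at h
  exact h

/-- Branch invariance: `x ≤ y → x* = y*`. -/
lemma bi {x y : A} (h : P.ar x y = P.one) : P.st x = P.st y := by
  have h1 := P.k1 x y
  rw [h] at h1
  exact P.ax5 _ _ h1 (P.anti h)

lemma fix_max {x y : A} (h : P.ar (P.st (P.st x)) y = P.one) :
    y = P.st (P.st x) := by
  have hb := P.bi h
  rw [P.st3 x] at hb
  have h2 : P.st (P.st x) = P.st (P.st y) := by rw [hb]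
  have h3 := P.le_star2 y
  rw [← h2] at h3
  exact P.ax5 y _ h3 h

lemma isAtom_iff_fix {a : A} : P.IsAtom a ↔ P.st (P.st a) = a := by
  constructor
  · intro h
    exact h _ (P.le_star2 a)
  · intro h x hx
    have hx' : P.ar (P.st (P.st a)) x = P.one := by rw [h]; exact hx
    have := P.fix_max hx'
    rw [h] at this
    exact this

lemma atom_st (x : A) : P.IsAtom (P.st x) :=
  P.isAtom_iff_fix.mpr (P.st3 x)

lemma atom_one : P.IsAtom P.one := by
  rw [P.isAtom_iff_fix, P.st_one, P.st_one]

lemma canc7 {b : A} (hb : P.IsAtom b) (v : A) : P.ar (P.ar b v) v = b :=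
  hb _ (P.tr (P.ar_of_wa (P.p3a b v)) (P.ql (P.ar b v) v))

lemma I3gen {b : A} (hb : P.IsAtom b) (a : A) : P.ar a b = P.st (P.ar b a) := by
  have h1 := P.k1 (P.ar b a) a
  rw [P.canc7 hb a] at h1
  exact P.atom_st (P.ar b a) _ h1

lemma atom_ar2 {b : A} (hb : P.IsAtom b) (a : A) : P.IsAtom (P.ar a b) := by
  rw [P.I3gen hb a]
  exact P.atom_st _

lemma k2' (x y : A) : P.ar y (P.ar (P.st x) (P.ar x y)) = P.one := by
  have h0 := P.k1 x y
  have h1 := P.mA h0 (P.ar x y)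
  have h2 := P.ar_of_wa (P.p3a y (P.ar x y))
  have h3 := P.ql (P.ar y (P.ar x y)) (P.ar x y)
  exact P.tr (P.tr h2 h3) h1

lemma canc1' (x : A) {b : A} (hb : P.IsAtom b) :
    P.ar (P.st x) (P.ar x b) = b :=
  hb _ (P.k2' x b)

lemma comm0 {p q : A} (hp : P.IsAtom p) (hq : P.IsAtom q) :
    P.ar p q = P.ar (P.st q) (P.st p) := by
  have h1 : P.ar (P.ar p q) (P.wa (P.st q) (P.st p)) = P.one :=
    P.ar_of_wa (P.ax1 p q P.one)
  have h2 := P.ql (P.st q) (P.st p)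
  have h3 := P.tr h1 h2
  exact ((P.atom_ar2 hq p) _ h3).symm

lemma wa_eq {p q : A} (hp : P.IsAtom p) (hq : P.IsAtom q) :
    P.wa p q = P.ar (P.st q) (P.st p) := by
  apply P.ax5
  · have h := P.ax2 p q P.one
    rwa [← P.p6 q] at h
  · have h : P.wa (P.ar (P.st q) (P.st p)) (P.wa (P.st (P.st p)) (P.st (P.st q))) = P.one :=
      P.ax1 (P.st q) (P.st p) P.one
    rw [P.isAtom_iff_fix.mp hp, P.isAtom_iff_fix.mp hq] at h
    exact P.ar_of_wa h

lemma opc {p q : A} (hp : P.IsAtom p) (hq : P.IsAtom q) :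
    P.wa p q = P.ar p q := by
  rw [P.wa_eq hp hq, ← P.comm0 hp hq]

lemma atom_wa2 {p q : A} (hp : P.IsAtom p) (hq : P.IsAtom q) :
    P.IsAtom (P.wa p q) := by
  rw [P.opc hp hq]
  exact P.atom_ar2 hq p

lemma swap {p q : A} (hp : P.IsAtom p) (hq : P.IsAtom q) :
    P.st (P.ar p q) = P.ar q p := by
  have h := P.I3gen hq p
  rw [h]
  exact P.isAtom_iff_fix.mp (P.atom_ar2 hp q)

lemma comm {p q : A} (hp : P.IsAtom p) (hq : P.IsAtom q) :
    P.ar (P.st p) q = P.ar (P.st q) p := by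
  have h := P.comm0 (P.atom_st p) hq
  rwa [P.isAtom_iff_fix.mp hp] at h

lemma comm2 {p q : A} (hp : P.IsAtom p) (hq : P.IsAtom q) :
    P.ar p (P.st q) = P.ar q (P.st p) := by
  have h := P.comm0 hp (P.atom_st q)
  rwa [P.isAtom_iff_fix.mp hq] at h

lemma tern {x y z : A} (hy : P.IsAtom y) (hz : P.IsAtom z) :
    P.ar (P.ar y z) (P.ar x z) = P.ar x y := by
  have h1 : P.ar (P.ar x y) (P.wa (P.ar y z) (P.ar x z)) = P.one :=
    P.ar_of_wa (P.ax1 x y z)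
  have h2 := (P.atom_ar2 hy x) _ h1
  rwa [P.opc (P.atom_ar2 hz y) (P.atom_ar2 hz x)] at h2

lemma K {x y z : A} (hx : P.IsAtom x) (hz : P.IsAtom z) :
    P.ar y (P.ar x z) = P.ar x (P.ar y z) := by
  have h := (P.tern (x := y) (P.atom_ar2 hz x) hz).symm
  rwa [P.canc7 hx z] at h

lemma ASSOC {a b c : A} (ha : P.IsAtom a) (hb : P.IsAtom b) (hc : P.IsAtom c) :
    P.ar (P.ar b (P.st a)) c = P.ar (P.st a) (P.ar (P.st b) c) := by
  rw [← P.swap (P.atom_st a) hb]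
  rw [P.comm (P.atom_ar2 hb (P.st a)) hc]
  rw [P.K (P.atom_st a) hb]
  rw [P.comm hc hb]

end Aux

end PseudoBCI

theorem stmt10 {A : Type*} (P : PseudoBCI A) (d : A → A)
    (hd : P.IsIDerI d ∨ P.IsIDerII d) :
    (∀ a, P.IsAtom a → P.IsAtom (d a)) ∧
    (P.InK (d P.one) → d P.one = P.one) ∧
    (∀ a b, P.IsAtom a → P.IsAtom b →
      d (P.wa (P.ar a P.one) b) =
        P.wa (P.ar (P.wa (P.ar (d a) P.one) (P.ar (d P.one) P.one)) P.one) (d b)) ∧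
    ((∀ a, P.IsAtom a → d a = a) ↔ d P.one = P.one) := by
  obtain ⟨h1, h2⟩ | ⟨h1, h2⟩ := hd
  · -- Type I
    have e0 := h2 P.one P.one
    rw [P.ax4 P.one, P.ax4 (d P.one)] at e0
    have e0' : d P.one =
        P.wa (P.ar (d P.one) (P.wa (d P.one) P.one)) (P.wa (d P.one) P.one) := e0
    rw [← P.p6 (d P.one)] at e0'
    have eq1 : P.ar (d P.one) (P.ar (d P.one) P.one) =
        P.ar (P.st (P.st (d P.one))) (P.ar (d P.one) P.one) := by
      have hle := P.mA (P.le_star2 (d P.one)) (P.st (d P.one))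
      exact (P.atom_ar2 (P.atom_st (d P.one)) (P.st (P.st (d P.one)))) _ hle
    rw [eq1] at e0'
    have hc : P.IsAtom (d P.one) := by
      rw [e0']
      exact P.atom_wa2 (P.atom_ar2 (P.atom_st (d P.one)) (P.st (P.st (d P.one))))
        (P.atom_st (d P.one))
    have hform : ∀ z, P.IsAtom z → d z = P.wa (P.st z) (d P.one) := by
      intro z hz
      have key : P.wa (P.st z) P.one = z := by
        rw [← P.p6 (P.st z)]
        exact P.isAtom_iff_fix.mp hz
      have e := h2 (P.st z) P.one
      rw [key] at e
      have e' : d z = P.wa (P.ar (P.wa (P.st z) (d P.one))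
          (P.wa (d (P.st z)) P.one)) (P.wa (d (P.st z)) P.one) := e
      have h3 := P.p3a (P.wa (P.st z) (d P.one)) (P.wa (d (P.st z)) P.one)
      rw [← e'] at h3
      exact (P.atom_wa2 (P.atom_st z) hc) _ (P.ar_of_wa h3)
    refine ⟨?_, ?_, ?_, ?_⟩
    · intro a ha
      rw [hform a ha]
      exact P.atom_wa2 (P.atom_st a) hc
    · intro h
      exact (hc P.one h).symm
    · intro a b ha hb
      have hab : P.IsAtom (P.wa (P.st a) b) := P.atom_wa2 (P.atom_st a) hb
      show d (P.wa (P.st a) b) =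
        P.wa (P.st (P.wa (P.st (d a)) (P.st (d P.one)))) (d b)
      rw [hform _ hab, hform b hb, hform a ha]
      rw [P.opc (P.atom_st a) hb]
      rw [P.opc (P.atom_st a) hc]
      rw [P.swap (P.atom_st a) hb]
      rw [P.swap (P.atom_st a) hc]
      rw [P.comm2 hc ha]
      rw [P.opc (P.atom_ar2 (P.atom_st (d P.one)) a) (P.atom_st (d P.one))]
      rw [P.canc7 ha (P.st (d P.one))]
      rw [P.opc (P.atom_st b) hc]
      rw [P.opc (P.atom_ar2 (P.atom_st a) b) hc]
      rw [P.opc (P.atom_st a) (P.atom_ar2 hc (P.st b))]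
      exact P.ASSOC ha hb hc
    · constructor
      · intro hall
        exact hall P.one P.atom_one
      · intro h0 a ha
        rw [hform a ha, h0, ← P.p6 (P.st a)]
        exact P.isAtom_iff_fix.mp ha
  · -- Type II
    have e0 := h2 P.one P.one
    rw [P.ax4 P.one, P.ax4 (d P.one)] at e0
    have e0' : d P.one =
        P.wa (P.ar (P.wa (d P.one) P.one) (d P.one)) (d P.one) := e0
    have h3 := P.p3a (P.wa (d P.one) P.one) (d P.one)
    rw [← e0'] at h3
    rw [← P.p6 (d P.one)] at h3
    have hle : P.ar (P.st (d P.one)) (d P.one) = P.one := P.ar_of_wa h3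
    have heq : d P.one = P.st (d P.one) := P.atom_st (d P.one) (d P.one) hle
    have hc : P.IsAtom (d P.one) := by
      rw [heq]
      exact P.atom_st (d P.one)
    have hform : ∀ z, P.IsAtom z → d z = P.ar (d P.one) z := by
      intro z hz
      have e := h1 P.one z
      rw [P.ax3 z, P.ax3 (d z)] at e
      have e' : d z = P.ar (P.wa (P.ar (d P.one) z) (d z)) (d z) := e
      have h4 := P.p3b (P.ar (d P.one) z) (d z)
      rw [← e'] at h4
      exact (P.atom_ar2 hz (d P.one)) _ h4
    refine ⟨?_, ?_, ?_, ?_⟩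
    · intro a ha
      rw [hform a ha]
      exact P.atom_ar2 ha (d P.one)
    · intro h
      exact (hc P.one h).symm
    · intro a b ha hb
      have hab : P.IsAtom (P.wa (P.st a) b) := P.atom_wa2 (P.atom_st a) hb
      show d (P.wa (P.st a) b) =
        P.wa (P.st (P.wa (P.st (d a)) (P.st (d P.one)))) (d b)
      rw [hform _ hab, hform b hb, hform a ha]
      rw [P.swap hc ha]
      rw [← heq]
      rw [P.opc (P.atom_ar2 hc a) hc]
      rw [P.canc7 ha (d P.one)]
      rw [P.opc (P.atom_st a) hb]
      rw [P.opc (P.atom_st a) (P.atom_ar2 hb (d P.one))]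
      exact P.K (P.atom_st a) hb
    · constructor
      · intro hall
        exact hall P.one P.atom_one
      · intro h0 a ha
        rw [hform a ha, h0]
        exact P.ax3 a
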